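/- If G has exactly one isolated vertex v with image vertex u in M(G), then {u₁,...,uₙ} ∪ {v} is an independent set in M(G) of size n+1 = (|V(M(G))|+1)/2. -/

import Mathlib

open Finset

/-- An orientation of a simple graph: each edge gets a tail and a head. -/
structure GraphOrientation {V : Type*} (G : SimpleGraph V) where
  tail : G.edgeSet → V
  head : G.edgeSet → V
  consistent : ∀ e : G.edgeSet, (e : Sym2 V) = s(tail e, head e)

/-- Vertex sum: sum of labels of in-edges minus sum of labels of out-edges. -/
def vertexSum {V : Type*} {G : SimpleGraph V} [Fintype G.edgeSet] [DecidableEq V]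
    (D : GraphOrientation G) (τ : G.edgeSet → ℤ) (v : V) : ℤ :=
  (∑ e : G.edgeSet, if D.head e = v then τ e else 0)
    - ∑ e : G.edgeSet, if D.tail e = v then τ e else 0

/-- In-degree of a vertex under an orientation. -/
def inDeg {V : Type*} {G : SimpleGraph V} [Fintype G.edgeSet] [DecidableEq V]
    (D : GraphOrientation G) (v : V) : ℕ :=
  (Finset.univ.filter fun e : G.edgeSet => D.head e = v).card

/-- Out-degree of a vertex under an orientation. -/
def outDeg {V : Type*} {G : SimpleGraph V} [Fintype G.edgeSet] [DecidableEq V]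
    (D : GraphOrientation G) (v : V) : ℕ :=
  (Finset.univ.filter fun e : G.edgeSet => D.tail e = v).card

/-- A graph admits an antimagic orientation. -/
def AdmitsAntimagicOrientation {V : Type*} [DecidableEq V] (G : SimpleGraph V)
    [Fintype G.edgeSet] : Prop :=
  ∃ (D : GraphOrientation G) (τ : G.edgeSet → ℤ),
    Set.BijOn τ Set.univ (Set.Icc (1 : ℤ) (Fintype.card G.edgeSet)) ∧
    Function.Injective (vertexSum D τ)

/-- The Mycielski construction. `Sum.inl a` are original vertices,
`Sum.inr (Sum.inl a)` their images, `Sum.inr (Sum.inr ())` the apex `w`. -/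
def mycielski {V : Type*} (G : SimpleGraph V) : SimpleGraph (V ⊕ (V ⊕ Unit)) where
  Adj x y :=
    match x, y with
    | .inl a, .inl b => G.Adj a b
    | .inl a, .inr (.inl b) => G.Adj a b
    | .inr (.inl a), .inl b => G.Adj a b
    | .inr (.inl _), .inr (.inr _) => True
    | .inr (.inr _), .inr (.inl _) => True
    | _, _ => False
  symm := by
    constructor
    rintro (a | b | c) (a' | b' | c') h <;> simp_all <;> exact G.symm.symm _ _ h
  loopless := by
    constructor
    rintro (a | b | c) h <;> simp_all

namespace SimpleGraph

theorem IsIndepSet.not_adj {V : Type*} {G : SimpleGraph V} {s : Set V} (hs : G.IsIndepSet s)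
    {x y : V} (hx : x ∈ s) (hy : y ∈ s) : ¬ G.Adj x y :=
  fun hxy => hs hx hy hxy.ne hxy

variable {V : Type*} (G : SimpleGraph V)

/-- The image vertices `uᵢ` of the Mycielski graph. -/
def mycielskiImage : Set (V ⊕ (V ⊕ Unit)) := Set.range fun a : V => Sum.inr (Sum.inl a)

theorem isIndepSet_mycielskiImage : (mycielski G).IsIndepSet (mycielskiImage (V := V)) := by
  rintro _ ⟨a, rfl⟩ _ ⟨b, rfl⟩ _ hab
  exact hab

variable {G}

theorem IsIsolated.isIndepSet_insert_mycielskiImage {v : V} (hv : G.IsIsolated v) :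
    (mycielski G).IsIndepSet (insert (Sum.inl v) mycielskiImage) := by
  refine (isIndepSet_mycielskiImage G).insert fun _ ⟨b, hb⟩ _ => ?_
  subst hb
  exact ⟨hv b, fun hbv => hv b hbv.symm⟩

theorem ncard_insert_inl_mycielskiImage [Finite V] (v : V) :
    (insert (Sum.inl v) (mycielskiImage (V := V))).ncard = Nat.card V + 1 := by
  rw [Set.ncard_insert_of_notMem (by simp [mycielskiImage]), mycielskiImage,
    Set.ncard_range_of_injective fun a b h => by simpa using h]

end SimpleGraph

theorem mycielski_indep_with_isolated_general {V : Type*} [Fintype V]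
    (G : SimpleGraph V) [DecidableRel G.Adj]
    (v : V) (hv : G.degree v = 0) :
    (∀ x ∈ insert (Sum.inl v : V ⊕ (V ⊕ Unit))
        (Set.range fun a : V => (Sum.inr (Sum.inl a) : V ⊕ (V ⊕ Unit))),
      ∀ y ∈ insert (Sum.inl v : V ⊕ (V ⊕ Unit))
        (Set.range fun a : V => (Sum.inr (Sum.inl a) : V ⊕ (V ⊕ Unit))),
        ¬ (mycielski G).Adj x y) ∧
    (insert (Sum.inl v : V ⊕ (V ⊕ Unit))
        (Set.range fun a : V => (Sum.inr (Sum.inl a) : V ⊕ (V ⊕ Unit)))).ncard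
      = Fintype.card V + 1 ∧
    Fintype.card V + 1 = (Fintype.card (V ⊕ (V ⊕ Unit)) + 1) / 2 := by
  have hindep := ((G.degree_eq_zero v).mp hv).isIndepSet_insert_mycielskiImage
  refine ⟨fun x hx y hy => hindep.not_adj hx hy, ?_, ?_⟩
  · rw [← Nat.card_eq_fintype_card]
    exact SimpleGraph.ncard_insert_inl_mycielskiImage v
  · simp only [Fintype.card_sum, Fintype.card_unit]
    omega

/-- if G has exactly one isolated vertex v, then the image vertices
together with v form an independent set of M(G) of size n+1 = (|V(M(G))|+1)/2. -/
theorem mycielski_indep_with_isolated {V : Type*} [Fintype V] [DecidableEq V]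
    (G : SimpleGraph V) [DecidableRel G.Adj]
    (v : V) (hv : G.degree v = 0) (huniq : ∀ w : V, G.degree w = 0 → w = v) :
    (∀ x ∈ insert (Sum.inl v : V ⊕ (V ⊕ Unit))
        (Set.range fun a : V => (Sum.inr (Sum.inl a) : V ⊕ (V ⊕ Unit))),
      ∀ y ∈ insert (Sum.inl v : V ⊕ (V ⊕ Unit))
        (Set.range fun a : V => (Sum.inr (Sum.inl a) : V ⊕ (V ⊕ Unit))),
        ¬ (mycielski G).Adj x y) ∧
    (insert (Sum.inl v : V ⊕ (V ⊕ Unit))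
        (Set.range fun a : V => (Sum.inr (Sum.inl a) : V ⊕ (V ⊕ Unit)))).ncard
      = Fintype.card V + 1 ∧
    Fintype.card V + 1 = (Fintype.card (V ⊕ (V ⊕ Unit)) + 1) / 2 :=
  mycielski_indep_with_isolated_general G v hv
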